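/- arXiv:1701.07915 — 2 statements merged into one kernel-verified Lean document; each statement's English description precedes it below -/
import Mathlib

section
/- For positive integers m, n ≥ h: ∑_{k=0}^{h} q^{(n−k)(h−k)} ( O(n,k)·O(m, h−k) + t·O(n−1, k)·O(m−1, h−k−1) ) = O(m+n, h), where O(a,b) denotes the over-(q,t)-binomial coefficient for the (a−b)×b rectangle (interpreted as 0 when b < 0 or b > a). -/
open Finset Polynomial

/-- `overp m n k N` is the number of overpartitions of `N` with `k` overlined parts,
largest part `≤ m`, and at most `n` parts. An overpartition is a partition together
with a subset of its (distinct) part sizes which are overlined. -/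
noncomputable def overp (m n k N : ℕ) : ℕ :=
  Nat.card {p : Nat.Partition N × Finset ℕ //
    (∀ i ∈ p.1.parts, i ≤ m) ∧ Multiset.card p.1.parts ≤ n ∧
    p.2 ⊆ p.1.parts.toFinset ∧ p.2.card = k}

/-- The over-(q,t)-binomial coefficient for the `m × n` rectangle, evaluated at
elements `q t` of a commutative ring. -/
noncomputable def Oqt {R : Type*} [CommRing R] (q t : R) (m n : ℕ) : R :=
  ∑ N ∈ range (m * n + 1), ∑ k ∈ range (n + 1), (overp m n k N : R) * t ^ k * q ^ N

/-!
Draw an overpartition in the `(m + n - h) × h` box as a Young diagram with `h` rows, padded by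
empty rows. There is a unique `k ≤ h` such that the top `h - k` rows have length at least `n - k`
and the other `k` rows have length at most `n - k`. Removing the `(h - k) × (n - k)` rectangle
leaves an overpartition in the `(m - h + k) × (h - k)` box to its right and one in the
`(n - k) × k` box below it, and overlined sizes travel with their rows. The one exception is an
overlined size `n - k` all of whose copies lie in the rectangle: then the rows below are shorter
than `n - k`, at most `h - k - 1` rows stick out to the right, and the lost overline is the
factor `t`.
-/

-- An overpartition is encoded as the pair (multiset of parts, set of overlined part sizes).
def overBox (a b : ℕ) : Finset (Multiset ℕ × Finset ℕ) :=
  ((b • Multiset.Icc 1 a).powerset.toFinset ×ˢ (Icc 1 a).powerset).filter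
    fun x => Multiset.card x.1 ≤ b ∧ x.2 ⊆ x.1.toFinset

theorem mem_overBox {a b : ℕ} {x : Multiset ℕ × Finset ℕ} :
    x ∈ overBox a b ↔
      (∀ i ∈ x.1, 0 < i ∧ i ≤ a) ∧ Multiset.card x.1 ≤ b ∧ x.2 ⊆ x.1.toFinset := by
  simp only [overBox, mem_filter, mem_product, Multiset.mem_toFinset, Multiset.mem_powerset,
    mem_powerset]
  constructor
  · rintro ⟨⟨hle, -⟩, hcard, hS⟩
    refine ⟨fun i hi => ?_, hcard, hS⟩
    have := Multiset.mem_of_le hle hi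
    simp only [Multiset.mem_nsmul, Multiset.mem_Icc] at this
    omega
  · rintro ⟨hs, hcard, hS⟩
    refine ⟨⟨Multiset.le_iff_count.2 fun i => ?_, fun i hi => ?_⟩, hcard, hS⟩
    · by_cases hi : i ∈ x.1
      · rw [Multiset.count_nsmul, Multiset.count_eq_one_of_mem (Multiset.nodup_Icc)
          (Multiset.mem_Icc.2 (hs i hi)), mul_one]
        exact (Multiset.count_le_card i x.1).trans hcard
      · simp [Multiset.count_eq_zero_of_notMem hi]
    · have := hs i (Multiset.mem_toFinset.1 (hS hi))
      simp only [mem_Icc]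
      omega

theorem overBox_mono {a a' b b' : ℕ} (ha : a ≤ a') (hb : b ≤ b') :
    overBox a b ⊆ overBox a' b' := by
  intro x hx
  obtain ⟨hs, hcard, hS⟩ := mem_overBox.1 hx
  exact mem_overBox.2 ⟨fun i hi => ⟨(hs i hi).1, (hs i hi).2.trans ha⟩, hcard.trans hb, hS⟩

theorem overp_eq_card_filter (a b k N : ℕ) :
    overp a b k N = #{x ∈ overBox a b | (x.1.sum, x.2.card) = (N, k)} := by
  rw [overp, ← Fintype.card_coe, ← Nat.card_eq_fintype_card]
  refine Nat.card_congr ⟨fun p => ⟨(p.1.1.parts, p.1.2), ?_⟩,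
    fun x => ⟨(⟨x.1.1, fun hi => ((mem_overBox.1 (mem_filter.1 x.2).1).1 _ hi).1,
      (Prod.ext_iff.1 (mem_filter.1 x.2).2).1⟩, x.1.2), ?_⟩, fun _ => rfl, fun _ => rfl⟩
  · obtain ⟨⟨P, S⟩, hle, hcard, hS, hk⟩ := p
    exact mem_filter.2 ⟨mem_overBox.2 ⟨fun i hi => ⟨P.parts_pos hi, hle i hi⟩, hcard, hS⟩,
      Prod.ext P.parts_sum hk⟩
  · obtain ⟨hs, hcard, hS⟩ := mem_overBox.1 (mem_filter.1 x.2).1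
    exact ⟨fun i hi => (hs i hi).2, hcard, hS, (Prod.ext_iff.1 (mem_filter.1 x.2).2).2⟩

def overWeight {R : Type*} [Monoid R] (q t : R) (x : Multiset ℕ × Finset ℕ) : R :=
  t ^ x.2.card * q ^ x.1.sum

theorem Oqt_eq_sum_overWeight {R : Type*} [CommRing R] (q t : R) (a b : ℕ) :
    Oqt q t a b = ∑ x ∈ overBox a b, overWeight q t x := by
  have hmaps : ∀ x ∈ overBox a b,
      (x.1.sum, x.2.card) ∈ range (a * b + 1) ×ˢ range (b + 1) := by
    intro x hx
    obtain ⟨hs, hcard, hS⟩ := mem_overBox.1 hx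
    have hsum : x.1.sum ≤ Multiset.card x.1 • a :=
      Multiset.sum_le_card_nsmul x.1 a fun i hi => (hs i hi).2
    have hS_card : x.2.card ≤ Multiset.card x.1 :=
      (card_le_card hS).trans (Multiset.toFinset_card_le x.1)
    simp only [mem_product, mem_range, smul_eq_mul] at hsum ⊢
    constructor
    · nlinarith
    · omega
  rw [Oqt, ← sum_product', ← sum_fiberwise_of_maps_to hmaps]
  refine sum_congr rfl fun p _ => ?_
  have hfiber : ∀ x ∈ {x ∈ overBox a b | (x.1.sum, x.2.card) = p},
      overWeight q t x = t ^ p.2 * q ^ p.1 := by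
    intro x hx
    rw [overWeight, ← (mem_filter.1 hx).2]
  rw [sum_congr rfl hfiber, sum_const, overp_eq_card_filter, nsmul_eq_mul, mul_assoc]

def upperPart (v : ℕ) (s : Multiset ℕ) : Multiset ℕ :=
  (s.filter (v < ·)).map (· - v)

def lowerPart (v r : ℕ) (s : Multiset ℕ) : Multiset ℕ :=
  s.filter (· ≤ v) - Multiset.replicate (r - Multiset.card (s.filter (v < ·))) v

/-- The Young diagram with an `r × v` rectangle in its top left corner, the rows of `w` to the
right of it and the rows of `u` below it. -/
def glue (v r : ℕ) (w u : Multiset ℕ) : Multiset ℕ :=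
  w.map (· + v) + Multiset.replicate (r - Multiset.card w) v + u

/-- The `r` largest parts of `s` are at least `v` and the others are at most `v`. -/
def IsSplitAt (v r : ℕ) (s : Multiset ℕ) : Prop :=
  Multiset.card (s.filter (v < ·)) ≤ r ∧ r ≤ Multiset.card (s.filter (v ≤ ·))

section Split

variable {v r : ℕ} {s w u : Multiset ℕ}

theorem card_filter_ge_eq_card_filter_gt_add_count (v : ℕ) (s : Multiset ℕ) :
    Multiset.card (s.filter (v ≤ ·)) = Multiset.card (s.filter (v < ·)) + s.count v := by
  have hsplit : (s.filter (v ≤ ·)).filter (v < ·) + (s.filter (v ≤ ·)).filter (¬v < ·) =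
      s.filter (v ≤ ·) := Multiset.filter_add_not _ _
  rw [Multiset.filter_filter, Multiset.filter_filter] at hsplit
  rw [← hsplit, Multiset.card_add, Multiset.count_eq_card_filter_eq]
  congr 2 <;> exact Multiset.filter_congr fun i _ => by omega

theorem filter_gt_add_filter_le (v : ℕ) (s : Multiset ℕ) :
    s.filter (v < ·) + s.filter (· ≤ v) = s := by
  conv_rhs => rw [← Multiset.filter_add_not (v < ·) s]
  congr 1
  exact Multiset.filter_congr fun i _ => not_lt.symm

theorem card_upperPart (v : ℕ) (s : Multiset ℕ) :
    Multiset.card (upperPart v s) = Multiset.card (s.filter (v < ·)) :=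
  Multiset.card_map _ _

theorem mem_upperPart {i : ℕ} : i ∈ upperPart v s ↔ ∃ j ∈ s, v < j ∧ j - v = i := by
  simp [upperPart, and_assoc]

theorem lowerPart_le_filter : lowerPart v r s ≤ s.filter (· ≤ v) := tsub_le_self

theorem lowerPart_zero (v : ℕ) (s : Multiset ℕ) : lowerPart v 0 s = s.filter (· ≤ v) := by
  simp [lowerPart]

theorem mem_lowerPart_of_lt {i : ℕ} (hi : i < v) : i ∈ lowerPart v r s ↔ i ∈ s := by
  rw [← Multiset.count_pos, ← Multiset.count_pos, lowerPart, Multiset.count_sub,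
    Multiset.count_replicate, if_neg hi.ne', Multiset.count_filter_of_pos (p := (· ≤ v)) hi.le,
    Nat.sub_zero]

theorem count_lowerPart_self :
    (lowerPart v r s).count v = s.count v - (r - Multiset.card (s.filter (v < ·))) := by
  rw [lowerPart, Multiset.count_sub, Multiset.count_replicate_self,
    Multiset.count_filter_of_pos (p := (· ≤ v)) le_rfl]

theorem lowerPart_add_replicate (h : IsSplitAt v r s) :
    lowerPart v r s + Multiset.replicate (r - Multiset.card (s.filter (v < ·))) v =
      s.filter (· ≤ v) := by
  refine tsub_add_cancel_of_le (Multiset.le_count_iff_replicate_le.1 ?_)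
  rw [Multiset.count_filter_of_pos (p := (· ≤ v)) le_rfl]
  have := card_filter_ge_eq_card_filter_gt_add_count v s
  have := h.2
  omega

theorem card_lowerPart (h : IsSplitAt v r s) :
    Multiset.card (lowerPart v r s) = Multiset.card s - r := by
  have hlow := congrArg Multiset.card (lowerPart_add_replicate h)
  have hs := congrArg Multiset.card (filter_gt_add_filter_le v s)
  rw [Multiset.card_add, Multiset.card_replicate] at hlow
  rw [Multiset.card_add] at hs
  have := h.1
  omega

theorem filter_glue_gt (hw : ∀ i ∈ w, 0 < i) (hu : ∀ i ∈ u, i ≤ v) :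
    (glue v r w u).filter (v < ·) = w.map (· + v) := by
  rw [glue, Multiset.filter_add, Multiset.filter_add, Multiset.filter_eq_self.2,
    Multiset.filter_eq_nil.2, Multiset.filter_eq_nil.2, add_zero, add_zero]
  · exact fun i hi => (hu i hi).not_gt
  · exact fun i hi => by rw [Multiset.eq_of_mem_replicate hi]; exact lt_irrefl v
  · simp only [Multiset.mem_map]
    rintro _ ⟨i, hi, rfl⟩
    have := hw i hi
    omega

theorem filter_glue_le (hw : ∀ i ∈ w, 0 < i) (hu : ∀ i ∈ u, i ≤ v) :
    (glue v r w u).filter (· ≤ v) = Multiset.replicate (r - Multiset.card w) v + u := by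
  rw [glue, Multiset.filter_add, Multiset.filter_add, Multiset.filter_eq_nil.2,
    Multiset.filter_eq_self.2, Multiset.filter_eq_self.2 hu, zero_add]
  · exact fun i hi => (Multiset.eq_of_mem_replicate hi).le
  · simp only [Multiset.mem_map]
    rintro _ ⟨i, hi, rfl⟩
    have := hw i hi
    omega

theorem upperPart_glue (hw : ∀ i ∈ w, 0 < i) (hu : ∀ i ∈ u, i ≤ v) :
    upperPart v (glue v r w u) = w := by
  rw [upperPart, filter_glue_gt hw hu, Multiset.map_map]
  simp

theorem lowerPart_glue (hw : ∀ i ∈ w, 0 < i) (hu : ∀ i ∈ u, i ≤ v) :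
    lowerPart v r (glue v r w u) = u := by
  rw [lowerPart, filter_glue_le hw hu, filter_glue_gt hw hu, Multiset.card_map,
    add_tsub_cancel_left]

theorem isSplitAt_glue (hw : ∀ i ∈ w, 0 < i) (hu : ∀ i ∈ u, i ≤ v)
    (hwr : Multiset.card w ≤ r) : IsSplitAt v r (glue v r w u) := by
  have hcount : r - Multiset.card w ≤ (glue v r w u).count v := by
    rw [glue, Multiset.count_add, Multiset.count_add, Multiset.count_replicate_self]
    omega
  rw [IsSplitAt, card_filter_ge_eq_card_filter_gt_add_count, filter_glue_gt hw hu,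
    Multiset.card_map]
  omega

theorem glue_upperPart_lowerPart (h : IsSplitAt v r s) :
    glue v r (upperPart v s) (lowerPart v r s) = s := by
  have hmap : (upperPart v s).map (· + v) = s.filter (v < ·) := by
    rw [upperPart, Multiset.map_map]
    conv_rhs => rw [← Multiset.map_id (s.filter (v < ·))]
    refine Multiset.map_congr rfl fun i hi => ?_
    have := Multiset.of_mem_filter hi
    simp only [Function.comp_apply, id_eq]
    omega
  rw [glue, hmap, card_upperPart, add_assoc, add_comm (Multiset.replicate _ _),
    lowerPart_add_replicate h, filter_gt_add_filter_le]

theorem card_glue (hwr : Multiset.card w ≤ r) :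
    Multiset.card (glue v r w u) = r + Multiset.card u := by
  simp only [glue, Multiset.card_add, Multiset.card_map, Multiset.card_replicate]
  omega

theorem sum_glue (hwr : Multiset.card w ≤ r) :
    (glue v r w u).sum = w.sum + u.sum + r * v := by
  obtain ⟨d, rfl⟩ := Nat.exists_eq_add_of_le hwr
  simp only [glue, Multiset.sum_add, Multiset.sum_map_add, Multiset.map_id', Multiset.map_const',
    Multiset.sum_replicate, smul_eq_mul, add_tsub_cancel_left]
  ring

end Split

section Shift

variable {v : ℕ} {S U W : Finset ℕ}

def shiftUp (v : ℕ) (W : Finset ℕ) : Finset ℕ := W.image (· + v)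

def shiftDown (v : ℕ) (S : Finset ℕ) : Finset ℕ := {i ∈ S | v < i}.image (· - v)

theorem shiftUp_shiftDown (v : ℕ) (S : Finset ℕ) :
    shiftUp v (shiftDown v S) = {i ∈ S | v < i} := by
  ext i
  simp only [shiftUp, shiftDown, mem_image, mem_filter]
  constructor
  · rintro ⟨_, ⟨j, ⟨hj, hvj⟩, rfl⟩, rfl⟩
    rw [Nat.sub_add_cancel hvj.le]
    exact ⟨hj, hvj⟩
  · rintro ⟨hi, hvi⟩
    exact ⟨i - v, ⟨i, ⟨hi, hvi⟩, rfl⟩, Nat.sub_add_cancel hvi.le⟩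

theorem shiftDown_shiftUp_union (hW : ∀ i ∈ W, 0 < i) (hU : ∀ i ∈ U, i ≤ v) :
    shiftDown v (shiftUp v W ∪ U) = W := by
  ext i
  simp only [shiftUp, shiftDown, mem_image, mem_filter, mem_union]
  constructor
  · rintro ⟨_, ⟨⟨j, hj, rfl⟩ | hU', hv⟩, rfl⟩
    · simpa using hj
    · exact absurd (hU _ hU') (by omega)
  · intro hi
    have := hW i hi
    exact ⟨i + v, ⟨Or.inl ⟨i, hi, rfl⟩, by omega⟩, by omega⟩

theorem filter_shiftUp_union {b : ℕ} (hbv : b ≤ v) (hW : ∀ i ∈ W, 0 < i)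
    (hU : ∀ i ∈ U, i ≤ b) : {i ∈ shiftUp v W ∪ U | i ≤ b} = U := by
  rw [filter_union, filter_true_of_mem hU, filter_false_of_mem, empty_union]
  simp only [shiftUp, mem_image]
  rintro _ ⟨i, hi, rfl⟩
  have := hW i hi
  omega

theorem card_shiftUp_union (hW : ∀ i ∈ W, 0 < i) (hU : ∀ i ∈ U, i ≤ v) :
    #(shiftUp v W ∪ U) = #W + #U := by
  rw [card_union_of_disjoint, shiftUp, card_image_of_injective _ (add_left_injective v)]
  simp only [shiftUp, disjoint_left, mem_image]
  rintro _ ⟨i, hi, rfl⟩ hiU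
  have := hW i hi
  have := hU _ hiU
  omega

end Shift

instance (v r : ℕ) (s : Multiset ℕ) : Decidable (IsSplitAt v r s) :=
  inferInstanceAs (Decidable (_ ∧ _))

def glueOver (v r : ℕ) (p : (Multiset ℕ × Finset ℕ) × (Multiset ℕ × Finset ℕ)) :
    Multiset ℕ × Finset ℕ :=
  (glue v r p.2.1 p.1.1, shiftUp v p.2.2 ∪ p.1.2)

def splitOver (v r : ℕ) (x : Multiset ℕ × Finset ℕ) :
    (Multiset ℕ × Finset ℕ) × (Multiset ℕ × Finset ℕ) :=
  ((lowerPart v r x.1, {i ∈ x.2 | i ≤ v}), (upperPart v x.1, shiftDown v x.2))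

/-- The overpartitions whose rectangle is `r × v`, excluding those with an overlined size `v`
that occurs only in the rectangle. -/
def splitFiber (c v r k : ℕ) : Finset (Multiset ℕ × Finset ℕ) :=
  {x ∈ overBox (c + v) (k + r) | IsSplitAt v r x.1 ∧ (v ∈ x.2 → v ∈ lowerPart v r x.1)}

def overlinedSplitFiber (c v r k : ℕ) : Finset (Multiset ℕ × Finset ℕ) :=
  {x ∈ overBox (c + (v + 1)) (k + (r + 1)) |
    IsSplitAt (v + 1) (r + 1) x.1 ∧ v + 1 ∈ x.2 ∧ v + 1 ∉ lowerPart (v + 1) (r + 1) x.1}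

section Bijection

variable {c v r k : ℕ} {x : Multiset ℕ × Finset ℕ}
  {p : (Multiset ℕ × Finset ℕ) × (Multiset ℕ × Finset ℕ)}

theorem mem_overBox_of_notMem {a b : ℕ} (hx : x ∈ overBox (a + 1) b) (ha : a + 1 ∉ x.1) :
    x ∈ overBox a b := by
  obtain ⟨hs, hcard, hS⟩ := mem_overBox.1 hx
  refine mem_overBox.2 ⟨fun i hi => ⟨(hs i hi).1, ?_⟩, hcard, hS⟩
  have : i ≠ a + 1 := fun h => ha (h ▸ hi)
  have := (hs i hi).2
  omega

theorem mem_overBox_of_card_le {a b b' : ℕ} (hx : x ∈ overBox a b')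
    (hb : Multiset.card x.1 ≤ b) : x ∈ overBox a b := by
  obtain ⟨hs, -, hS⟩ := mem_overBox.1 hx
  exact mem_overBox.2 ⟨hs, hb, hS⟩

theorem forall_mem_of_subset_toFinset {P : ℕ → Prop} {s : Multiset ℕ} {S : Finset ℕ}
    (hS : S ⊆ s.toFinset) (hs : ∀ i ∈ s, P i) : ∀ i ∈ S, P i :=
  fun i hi => hs i (Multiset.mem_toFinset.1 (hS hi))

theorem bounds_of_mem_product_overBox (hp : p ∈ overBox v k ×ˢ overBox c r) :
    (∀ i ∈ p.2.1, 0 < i) ∧ (∀ i ∈ p.2.2, 0 < i) ∧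
      (∀ i ∈ p.1.1, i ≤ v) ∧ (∀ i ∈ p.1.2, i ≤ v) := by
  obtain ⟨hu, hw⟩ := mem_product.1 hp
  obtain ⟨hu, -, hU⟩ := mem_overBox.1 hu
  obtain ⟨hw, -, hW⟩ := mem_overBox.1 hw
  have hw_pos : ∀ i ∈ p.2.1, 0 < i := fun i hi => (hw i hi).1
  have hu_le : ∀ i ∈ p.1.1, i ≤ v := fun i hi => (hu i hi).2
  exact ⟨hw_pos, forall_mem_of_subset_toFinset hW hw_pos, hu_le,
    forall_mem_of_subset_toFinset hU hu_le⟩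

theorem glueOver_splitOver (h : IsSplitAt v r x.1) : glueOver v r (splitOver v r x) = x := by
  refine Prod.ext (glue_upperPart_lowerPart h) ?_
  simp only [glueOver, splitOver]
  rw [shiftUp_shiftDown, filter_union_right, filter_true_of_mem fun i _ => lt_or_ge v i]

theorem splitOver_glueOver (hp : p ∈ overBox v k ×ˢ overBox c r) :
    splitOver v r (glueOver v r p) = p := by
  obtain ⟨hw_pos, hW_pos, hu_le, hU_le⟩ := bounds_of_mem_product_overBox hp
  simp only [splitOver, glueOver]
  rw [lowerPart_glue hw_pos hu_le, filter_shiftUp_union le_rfl hW_pos hU_le,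
    upperPart_glue hw_pos hu_le, shiftDown_shiftUp_union hW_pos hU_le]

theorem glueOver_mem (hv : r ≠ 0 → v ≠ 0) (hp : p ∈ overBox v k ×ˢ overBox c r) :
    glueOver v r p ∈ splitFiber c v r k := by
  obtain ⟨hw_pos, hW_pos, hu_le, -⟩ := bounds_of_mem_product_overBox hp
  obtain ⟨hu, hw⟩ := mem_product.1 hp
  obtain ⟨hu, huk, hU⟩ := mem_overBox.1 hu
  obtain ⟨hw, hwr, hW⟩ := mem_overBox.1 hw
  refine mem_filter.2 ⟨mem_overBox.2 ⟨fun i hi => ?_, ?_, ?_⟩,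
    isSplitAt_glue hw_pos hu_le hwr, fun hvS => ?_⟩
  · simp only [glueOver, glue, Multiset.mem_add, Multiset.mem_map, Multiset.mem_replicate] at hi
    rcases hi with (⟨j, hj, rfl⟩ | ⟨hr, rfl⟩) | hi
    · have := hw j hj
      omega
    · have := hv (by omega)
      omega
    · have := hu i hi
      omega
  · rw [glueOver, card_glue hwr]
    omega
  · intro i hi
    simp only [glueOver, shiftUp, mem_union, mem_image] at hi
    simp only [glueOver, glue, Multiset.mem_toFinset, Multiset.mem_add, Multiset.mem_map]
    rcases hi with ⟨j, hj, rfl⟩ | hi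
    · exact Or.inl (Or.inl ⟨j, Multiset.mem_toFinset.1 (hW hj), rfl⟩)
    · exact Or.inr (Multiset.mem_toFinset.1 (hU hi))
  · simp only [glueOver, shiftUp, mem_union, mem_image] at hvS
    rw [glueOver, lowerPart_glue hw_pos hu_le]
    rcases hvS with ⟨j, hj, hjv⟩ | hvU
    · have := hW_pos j hj
      omega
    · exact Multiset.mem_toFinset.1 (hU hvU)

theorem splitOver_mem (hx : x ∈ splitFiber c v r k) :
    splitOver v r x ∈ overBox v k ×ˢ overBox c r := by
  obtain ⟨hx, hsplit, hvS⟩ := mem_filter.1 hx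
  obtain ⟨hs, hcard, hS⟩ := mem_overBox.1 hx
  refine mem_product.2 ⟨mem_overBox.2 ⟨fun i hi => ?_, ?_, fun i hi => ?_⟩,
    mem_overBox.2 ⟨fun i hi => ?_, ?_, fun i hi => ?_⟩⟩
  · obtain ⟨his, hiv⟩ := Multiset.mem_filter.1 (Multiset.mem_of_le lowerPart_le_filter hi)
    exact ⟨(hs i his).1, hiv⟩
  · change Multiset.card (lowerPart v r x.1) ≤ k
    rw [card_lowerPart hsplit]
    omega
  · obtain ⟨hiS, hiv⟩ := mem_filter.1 hi
    rw [Multiset.mem_toFinset]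
    rcases hiv.lt_or_eq with hiv | rfl
    · exact (mem_lowerPart_of_lt hiv).2 (Multiset.mem_toFinset.1 (hS hiS))
    · exact hvS hiS
  · obtain ⟨j, hj, hvj, rfl⟩ := mem_upperPart.1 hi
    have := hs j hj
    omega
  · exact (card_upperPart v x.1).trans_le hsplit.1
  · simp only [splitOver, shiftDown, mem_image, mem_filter] at hi
    obtain ⟨j, ⟨hjS, hvj⟩, rfl⟩ := hi
    exact Multiset.mem_toFinset.2
      (mem_upperPart.2 ⟨j, Multiset.mem_toFinset.1 (hS hjS), hvj, rfl⟩)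

theorem overWeight_glueOver {R : Type*} [CommMonoid R] (q t : R)
    (hp : p ∈ overBox v k ×ˢ overBox c r) :
    overWeight q t (glueOver v r p) =
      q ^ (r * v) * (overWeight q t p.1 * overWeight q t p.2) := by
  obtain ⟨-, hW_pos, -, hU_le⟩ := bounds_of_mem_product_overBox hp
  have hwr := (mem_overBox.1 (mem_product.1 hp).2).2.1
  rw [overWeight, glueOver, card_shiftUp_union hW_pos hU_le, sum_glue hwr, overWeight,
    overWeight]
  simp only [pow_add]
  ac_rfl


theorem product_overBox_subset_succ :
    overBox v k ×ˢ overBox c r ⊆ overBox (v + 1) k ×ˢ overBox c (r + 1) :=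
  product_subset_product (overBox_mono (by omega) le_rfl) (overBox_mono le_rfl (by omega))

theorem succ_notMem_glueOver (hp : p ∈ overBox v k ×ˢ overBox c r) :
    v + 1 ∉ (glueOver (v + 1) (r + 1) p).2 := by
  obtain ⟨-, hW_pos, -, hU_le⟩ := bounds_of_mem_product_overBox hp
  simp only [glueOver, shiftUp, mem_union, mem_image, not_or, not_exists, not_and]
  exact ⟨fun i hi => by have := hW_pos i hi; omega, fun hv => by have := hU_le _ hv; omega⟩

theorem insert_glueOver_mem (hp : p ∈ overBox v k ×ˢ overBox c r) :
    ((glueOver (v + 1) (r + 1) p).1, insert (v + 1) (glueOver (v + 1) (r + 1) p).2) ∈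
      overlinedSplitFiber c v r k := by
  obtain ⟨hmem, hsplit, -⟩ :=
    mem_filter.1 (glueOver_mem (by omega) (product_overBox_subset_succ hp))
  obtain ⟨hs, hcard, hS⟩ := mem_overBox.1 hmem
  obtain ⟨hw_pos, -, hu_le, -⟩ := bounds_of_mem_product_overBox hp
  have hwr := (mem_overBox.1 (mem_product.1 hp).2).2.1
  have hv_mem : v + 1 ∈ (glueOver (v + 1) (r + 1) p).1 := by
    simp only [glueOver, glue, Multiset.mem_add, Multiset.mem_replicate, and_true]
    exact Or.inl (Or.inr (by omega))
  refine mem_filter.2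
    ⟨mem_overBox.2 ⟨hs, hcard, insert_subset (Multiset.mem_toFinset.2 hv_mem) hS⟩,
    hsplit, mem_insert_self _ _, ?_⟩
  rw [glueOver, lowerPart_glue hw_pos fun i hi => (hu_le i hi).trans v.le_succ]
  exact fun hv => absurd (hu_le _ hv) (by omega)

theorem splitOver_erase_mem (hx : x ∈ overlinedSplitFiber c v r k) :
    splitOver (v + 1) (r + 1) (x.1, x.2.erase (v + 1)) ∈ overBox v k ×ˢ overBox c r := by
  obtain ⟨hx, hsplit, hvS, hv_low⟩ := mem_filter.1 hx
  obtain ⟨hs, hcard, hS⟩ := mem_overBox.1 hx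
  have hx' : (x.1, x.2.erase (v + 1)) ∈ splitFiber c (v + 1) (r + 1) k :=
    mem_filter.2 ⟨mem_overBox.2 ⟨hs, hcard, (erase_subset _ _).trans hS⟩, hsplit,
      fun h => absurd h (notMem_erase _ _)⟩
  obtain ⟨hlow, hup⟩ := mem_product.1 (splitOver_mem hx')
  refine mem_product.2 ⟨mem_overBox_of_notMem hlow hv_low, mem_overBox_of_card_le hup ?_⟩
  -- all copies of `v + 1` are rows of the rectangle, so at most `r` rows stick out to the right
  have hcount := (count_lowerPart_self (r := r + 1) (s := x.1) (v := v + 1)).symm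
  rw [Multiset.count_eq_zero_of_notMem hv_low] at hcount
  have := Multiset.count_pos.2 (Multiset.mem_toFinset.1 (hS hvS))
  change Multiset.card (upperPart (v + 1) x.1) ≤ r
  rw [card_upperPart]
  omega

end Bijection

section Sums

variable {R : Type*} [CommRing R] (q t : R) {c v r k : ℕ}

theorem sum_splitFiber (hv : r ≠ 0 → v ≠ 0) :
    ∑ x ∈ splitFiber c v r k, overWeight q t x = q ^ (r * v) * (Oqt q t v k * Oqt q t c r) := by
  rw [Oqt_eq_sum_overWeight, Oqt_eq_sum_overWeight, sum_mul_sum, ← sum_product', mul_sum]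
  exact (sum_nbij' (glueOver v r) (splitOver v r) (fun _ hp => glueOver_mem hv hp)
    (fun _ hx => splitOver_mem hx) (fun _ hp => splitOver_glueOver hp)
    (fun _ hx => glueOver_splitOver (mem_filter.1 hx).2.1)
    (fun _ hp => (overWeight_glueOver q t hp).symm)).symm

theorem sum_overlinedSplitFiber :
    ∑ x ∈ overlinedSplitFiber c v r k, overWeight q t x =
      q ^ ((r + 1) * (v + 1)) * (t * (Oqt q t v k * Oqt q t c r)) := by
  rw [Oqt_eq_sum_overWeight, Oqt_eq_sum_overWeight, sum_mul_sum, ← sum_product', mul_sum,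
    mul_sum]
  symm
  refine sum_nbij' (fun p => ((glueOver (v + 1) (r + 1) p).1,
      insert (v + 1) (glueOver (v + 1) (r + 1) p).2))
    (fun x => splitOver (v + 1) (r + 1) (x.1, x.2.erase (v + 1)))
    (fun _ hp => insert_glueOver_mem hp) (fun _ hx => splitOver_erase_mem hx)
    (fun p hp => ?_) (fun x hx => ?_) (fun p hp => ?_)
  · rw [erase_insert (succ_notMem_glueOver hp)]
    exact splitOver_glueOver (product_overBox_subset_succ hp)
  · have hsplit : IsSplitAt (v + 1) (r + 1) (x.1, x.2.erase (v + 1)).1 := (mem_filter.1 hx).2.1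
    rw [glueOver_splitOver hsplit]
    exact Prod.ext rfl (insert_erase (mem_filter.1 hx).2.2.1)
  · have hweight := overWeight_glueOver q t (product_overBox_subset_succ hp)
    simp only [overWeight] at hweight ⊢
    rw [card_insert_of_notMem (succ_notMem_glueOver hp), pow_succ]
    linear_combination (-t) * hweight

end Sums

def splitIndex (n h : ℕ) (s : Multiset ℕ) : ℕ :=
  Nat.findGreatest (fun k => Multiset.card (s.filter (n - k < ·)) + k ≤ h) h

theorem splitIndex_le (n h : ℕ) (s : Multiset ℕ) : splitIndex n h s ≤ h :=
  Nat.findGreatest_le h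

theorem splitIndex_eq_iff {n h k : ℕ} {s : Multiset ℕ} (hnh : h ≤ n) (hkh : k ≤ h)
    (hs : Multiset.card s ≤ h) : splitIndex n h s = k ↔ IsSplitAt (n - k) (h - k) s := by
  have hmono : ∀ {i j}, i ≤ j →
      Multiset.card (s.filter (n - i < ·)) ≤ Multiset.card (s.filter (n - j < ·)) :=
    fun hij => Multiset.card_le_card (Multiset.monotone_filter_right _ fun x hx => by omega)
  have hsucc : ∀ {i}, i < n → s.filter (n - (i + 1) < ·) = s.filter (n - i ≤ ·) :=
    fun hi => Multiset.filter_congr fun x _ => by omega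
  have hzero : Multiset.card (s.filter (n - 0 < ·)) ≤ h :=
    (Multiset.card_le_card (Multiset.filter_le _ _)).trans hs
  rw [splitIndex, Nat.findGreatest_eq_iff, IsSplitAt]
  constructor
  · rintro ⟨-, hk, hmax⟩
    refine ⟨?_, ?_⟩
    · rcases Nat.eq_zero_or_pos k with rfl | hpos
      · simpa using hzero
      · have := hk hpos.ne'
        omega
    · rcases hkh.lt_or_eq with hlt | rfl
      · have := hmax (Nat.lt_succ_self k) hlt
        rw [hsucc (by omega)] at this
        omega
      · simp
  · rintro ⟨hgt, hge⟩
    refine ⟨hkh, fun _ => by omega, fun j hkj hjh hj => ?_⟩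
    have := hmono (show k + 1 ≤ j by omega)
    rw [hsucc (by omega)] at this
    omega

theorem sum_filter_splitIndex_eq {R : Type*} [CommRing R] (q t : R) {m n h k : ℕ}
    (hmh : h ≤ m) (hnh : h ≤ n) (hkh : k ≤ h) :
    ∑ x ∈ overBox (m + n - h) h with splitIndex n h x.1 = k, overWeight q t x =
      q ^ ((n - k) * (h - k)) *
        (Oqt q t (n - k) k * Oqt q t (m - h + k) (h - k) +
          t * (if k < h then Oqt q t (n - 1 - k) k * Oqt q t (m - h + k) (h - k - 1) else 0)) := by
  have hbox : overBox (m + n - h) h = overBox ((m - h + k) + (n - k)) (k + (h - k)) := by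
    congr 1 <;> omega
  rw [hbox, filter_congr fun x hx =>
      splitIndex_eq_iff hnh hkh ((mem_overBox.1 hx).2.1.trans (by omega)),
    ← sum_filter_add_sum_filter_not _
      (fun x => n - k ∈ x.2 → n - k ∈ lowerPart (n - k) (h - k) x.1),
    filter_filter, filter_filter, mul_comm (n - k), mul_add]
  congr 1
  · exact sum_splitFiber q t (by omega)
  split_ifs with hlt
  · obtain ⟨v, hv⟩ : ∃ v, n - k = v + 1 := ⟨n - k - 1, by omega⟩
    obtain ⟨r, hr⟩ : ∃ r, h - k = r + 1 := ⟨h - k - 1, by omega⟩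
    rw [show n - 1 - k = v by omega, show h - k - 1 = r by omega, hv, hr]
    simp only [Classical.not_imp]
    exact sum_overlinedSplitFiber q t
  · obtain rfl : k = h := by omega
    rw [filter_false_of_mem, sum_empty, mul_zero, mul_zero]
    rintro x hx ⟨-, hnot⟩
    refine hnot fun hvS => ?_
    rw [Nat.sub_self, lowerPart_zero]
    exact Multiset.mem_filter.2 ⟨Multiset.mem_toFinset.1 ((mem_overBox.1 hx).2.2 hvS), le_rfl⟩

theorem stmt8_general {R : Type*} [CommRing R] (q t : R) (m n h : ℕ)
    (hmh : h ≤ m) (hnh : h ≤ n) :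
    ∑ k ∈ range (h + 1), q ^ ((n - k) * (h - k)) *
        (Oqt q t (n - k) k * Oqt q t (m - h + k) (h - k) +
          t * (if k < h then Oqt q t (n - 1 - k) k * Oqt q t (m - h + k) (h - k - 1) else 0)) =
      Oqt q t (m + n - h) h := by
  rw [Oqt_eq_sum_overWeight, ← sum_fiberwise_of_maps_to
    (g := fun x : Multiset ℕ × Finset ℕ => splitIndex n h x.1)
    fun x _ => mem_range.2 (Nat.lt_succ_of_le (splitIndex_le n h x.1))]
  exact sum_congr rfl fun k hk =>
    (sum_filter_splitIndex_eq q t hmh hnh (Nat.lt_succ_iff.1 (mem_range.1 hk))).symm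

theorem stmt8 {R : Type*} [CommRing R] (q t : R) (m n h : ℕ)
    (hm : 0 < m) (hn : 0 < n) (hmh : h ≤ m) (hnh : h ≤ n) :
    ∑ k ∈ range (h + 1), q ^ ((n - k) * (h - k)) *
        (Oqt q t (n - k) k * Oqt q t (m - h + k) (h - k) +
          t * (if k < h then Oqt q t (n - 1 - k) k * Oqt q t (m - h + k) (h - k - 1) else 0)) =
      Oqt q t (m + n - h) h :=
  stmt8_general q t m n h hmh hnh
end

section
/- For integers with 0 ≤ k−r ≤ k ≤ ℓ ≤ ℓ+r ≤ n: D(n−k, k)·D(n−ℓ, ℓ) ≥ D(n−k+r, k−r)·D(n−ℓ−r, ℓ+r), where D denotes the Delannoy numbers. -/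
open Finset

/-- The Delannoy numbers. -/
def D : ℕ → ℕ → ℕ
  | 0, _ => 1
  | _ + 1, 0 => 1
  | m + 1, n + 1 => D m (n + 1) + D (m + 1) n + D m n

/-!
The growth ratio `D (x + 1) y / D x y` decreases in `x` and increases in `y`. Expanding
`D (x + 1) (y + 1)` and `D (u + 1) (v + 1)` by the recurrence reduces this to the same statement
at smaller indices together with its mirror image under `D m n = D n m`. Multiplying the two
shows that the ratio `D (x + 1) y / D x (y + 1)` of neighbours on an antidiagonal decreases as
well; this is what the induction needs and, telescoped along the antidiagonal `j ↦ D (n - j) j`,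
it is the theorem.
-/

theorem apply_sub_mul_apply_add_le {M : Type*} [Mul M] [Preorder M] {f : ℕ → M} {N : ℕ}
    (hf : ∀ a b, a ≤ b → b + 1 ≤ N → f a * f (b + 1) ≤ f (a + 1) * f b)
    {k l r : ℕ} (hrk : r ≤ k) (hkl : k ≤ l) (hlN : l + r ≤ N) :
    f (k - r) * f (l + r) ≤ f k * f l := by
  induction r with
  | zero => exact le_rfl
  | succ r ih =>
    calc f (k - (r + 1)) * f (l + (r + 1))
        ≤ f (k - (r + 1) + 1) * f (l + r) := hf (k - (r + 1)) (l + r) (by omega) (by omega)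
      _ = f (k - r) * f (l + r) := by rw [show k - (r + 1) + 1 = k - r by omega]
      _ ≤ f k * f l := ih (by omega) (by omega)

@[simp] theorem D_zero_left (n : ℕ) : D 0 n = 1 := by rw [D]

@[simp] theorem D_zero_right (m : ℕ) : D m 0 = 1 := by cases m <;> rw [D]

theorem D_succ_succ (m n : ℕ) : D (m + 1) (n + 1) = D m (n + 1) + D (m + 1) n + D m n := by
  rw [D]

theorem D_pos (m n : ℕ) : 0 < D m n := by
  induction m, n using D.induct with
  | case1 => simp
  | case2 => simp
  | case3 m n ih => rw [D_succ_succ]; omega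

theorem D_comm (m n : ℕ) : D m n = D n m := by
  induction m, n using D.induct with
  | case1 => simp
  | case2 => simp
  | case3 m n ih₁ ih₂ ih₃ => rw [D_succ_succ, D_succ_succ, ih₁, ih₂, ih₃]; ring

theorem D_le_D_succ_left (m n : ℕ) : D m n ≤ D (m + 1) n := by
  cases n with
  | zero => simp
  | succ n => rw [D_succ_succ]; omega

theorem D_mul_succ_right_le_iff {x y u v : ℕ} :
    D x y * D u (v + 1) ≤ D x (y + 1) * D u v ↔ D (v + 1) u * D y x ≤ D v u * D (y + 1) x := by
  rw [D_comm (v + 1), D_comm v, D_comm y, D_comm (y + 1), mul_comm (D u (v + 1)),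
    mul_comm (D u v)]

theorem D_succ_left_mul_succ_right_le_of_left_of_right {x y u v : ℕ}
    (hleft : D (x + 1) y * D u v ≤ D x y * D (u + 1) v)
    (hright : D x y * D u (v + 1) ≤ D x (y + 1) * D u v) :
    D (x + 1) y * D u (v + 1) ≤ D x (y + 1) * D (u + 1) v := by
  refine Nat.le_of_mul_le_mul_left ?_ (Nat.mul_pos (D_pos x y) (D_pos u v))
  calc D x y * D u v * (D (x + 1) y * D u (v + 1))
      = (D (x + 1) y * D u v) * (D x y * D u (v + 1)) := by ring
    _ ≤ (D x y * D (u + 1) v) * (D x (y + 1) * D u v) := Nat.mul_le_mul hleft hright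
    _ = D x y * D u v * (D x (y + 1) * D (u + 1) v) := by ring

theorem D_succ_left_mul_le {x y u v : ℕ} (hux : u ≤ x) (hyv : y ≤ v) :
    D (x + 1) y * D u v ≤ D x y * D (u + 1) v := by
  induction hs : x + y + u + v using Nat.strong_induction_on generalizing x y u v with
  | _ s ih =>
  cases y with
  | zero => simpa using D_le_D_succ_left u v
  | succ y =>
    obtain ⟨v, rfl⟩ : ∃ v', v = v' + 1 := ⟨v - 1, by omega⟩
    have hleft : D (x + 1) y * D u v ≤ D x y * D (u + 1) v :=
      ih _ (by omega) hux (by omega) rfl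
    have hright : D x y * D u (v + 1) ≤ D x (y + 1) * D u v :=
      D_mul_succ_right_le_iff.mpr <|
        ih (v + u + y + x) (by omega) (x := v) (y := u) (u := y) (v := x) (by omega) hux rfl
    have hanti := D_succ_left_mul_succ_right_le_of_left_of_right hleft hright
    rw [D_succ_succ x y, D_succ_succ u v]
    linarith

theorem D_succ_left_mul_succ_right_le {x y u v : ℕ} (hux : u ≤ x) (hyv : y ≤ v) :
    D (x + 1) y * D u (v + 1) ≤ D x (y + 1) * D (u + 1) v :=
  D_succ_left_mul_succ_right_le_of_left_of_right (D_succ_left_mul_le hux hyv)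
    (D_mul_succ_right_le_iff.mpr (D_succ_left_mul_le hyv hux))

theorem stmt18 (n k l r : ℕ) (hrk : r ≤ k) (hkl : k ≤ l) (hln : l + r ≤ n) :
    D (n - k + r) (k - r) * D (n - l - r) (l + r) ≤ D (n - k) k * D (n - l) l := by
  have hlogconcave : ∀ a b, a ≤ b → b + 1 ≤ n →
      D (n - a) a * D (n - (b + 1)) (b + 1) ≤ D (n - (a + 1)) (a + 1) * D (n - b) b := by
    intro a b hab hbn
    have h := D_succ_left_mul_succ_right_le (x := n - (a + 1)) (y := a) (u := n - (b + 1))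
      (v := b) (by omega) hab
    rwa [show n - (a + 1) + 1 = n - a by omega, show n - (b + 1) + 1 = n - b by omega] at h
  have h := apply_sub_mul_apply_add_le (f := fun j ↦ D (n - j) j) hlogconcave hrk hkl hln
  rwa [show n - (k - r) = n - k + r by omega, ← Nat.sub_sub] at h
end
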